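/- For every integer r ≥ 1, the convex hull 𝒜_r in ℝ^r of the set of all permutations of (1, 2, ..., r) is equal to the set 𝒜_r* = { (a_1,...,a_r) ∈ ℝ^r : Σ_{j=1}^r a_j = r(r+1)/2, and Σ_{j∈E} a_j ≥ |E|(|E|+1)/2 for every subset E ⊆ {1,...,r} }. -/

import Mathlib

/-!
Call `E` tight at `a` when the inequality for `E` is an equality. The inequalities cut out a
compact convex set containing every permutation vector, so by Krein–Milman it suffices to show
that its extreme points are permutation vectors. Strict supermodularity of `k ↦ k (k + 1) / 2`
makes the tight sets of a feasible point a chain, and at an extreme point any two coordinates are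
separated by a tight set, since otherwise mass could be moved between them in both directions.
If `Tᵢ` is a smallest tight set containing `i`, then `aᵢ ≤ |Tᵢ|` by the inequality for
`Tᵢ \ {i}`; separation makes `i ↦ |Tᵢ|` injective, hence a bijection onto `{1, …, r}`, and
comparing total sums forces `aᵢ = |Tᵢ|`.
-/

/-- `𝒜_r`: the convex hull in ℝ^r of the set of all permutations of the vector (1, 2, ..., r). -/
def permsHull (r : ℕ) : Set (Fin r → ℝ) :=
  convexHull ℝ {v : Fin r → ℝ | ∃ σ : Equiv.Perm (Fin r), v = fun i => ((σ i : ℕ) : ℝ) + 1}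

open Finset

lemma sum_range_cast_add_one (n : ℕ) :
    ∑ k ∈ range n, ((k : ℝ) + 1) = n * (n + 1) / 2 := by
  induction n with
  | zero => simp
  | succ n ih =>
    rw [sum_range_succ, ih]
    push_cast
    ring

lemma card_mul_card_add_one_div_two_le_sum {ι : Type*} {f : ι → ℕ}
    (hf : Function.Injective f) (E : Finset ι) :
    (#E : ℝ) * (#E + 1) / 2 ≤ ∑ i ∈ E, ((f i : ℝ) + 1) := by
  set s := E.image fun i => (f i : ℤ) + 1
  have hs : #s = #E := card_image_of_injective _ fun i j h => hf (by simpa using h)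
  have hint : ∑ k ∈ range #s, (1 + (k : ℤ)) ≤ ∑ x ∈ s, x :=
    sum_range_le_sum fun x hx => by
      obtain ⟨i, -, rfl⟩ := mem_image.1 hx
      omega
  rw [sum_image fun i _ j _ h => hf (by simpa using h), hs] at hint
  have hreal := (Int.cast_le (R := ℝ)).2 hint
  push_cast at hreal
  rw [← sum_range_cast_add_one]
  simpa only [add_comm (1 : ℝ)] using hreal

lemma eq_zero_of_mem_extremePoints_of_add_mem_of_sub_mem {𝕜 E : Type*} [Field 𝕜]
    [LinearOrder 𝕜] [IsStrictOrderedRing 𝕜] [AddCommGroup E] [Module 𝕜 E] {A : Set E} {x v : E}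
    (hx : x ∈ A.extremePoints 𝕜) (h₁ : x + v ∈ A) (h₂ : x - v ∈ A) : v = 0 := by
  have hseg : x ∈ openSegment 𝕜 (x + v) (x - v) :=
    ⟨1 / 2, 1 / 2, by norm_num, by norm_num, by norm_num, by module⟩
  simpa using hx.2 h₁ h₂ hseg

section Permutohedron

variable {ι : Type*} [Fintype ι]

/-- The set `𝒜_r*`, for an arbitrary finite index type. -/
def permutohedronIneq (ι : Type*) [Fintype ι] : Set (ι → ℝ) :=
  {a | ∑ j, a j = (Fintype.card ι : ℝ) * ((Fintype.card ι : ℝ) + 1) / 2 ∧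
    ∀ E : Finset ι, (#E : ℝ) * (#E + 1) / 2 ≤ ∑ j ∈ E, a j}

def IsTight (a : ι → ℝ) (E : Finset ι) : Prop :=
  ∑ j ∈ E, a j = (#E : ℝ) * (#E + 1) / 2

lemma isTight_univ {a : ι → ℝ} (ha : a ∈ permutohedronIneq ι) : IsTight a univ := by
  simpa [IsTight, card_univ] using ha.1

lemma equiv_add_one_mem_permutohedronIneq {n : ℕ} (e : ι ≃ Fin n) :
    (fun i => ((e i : ℕ) : ℝ) + 1) ∈ permutohedronIneq ι := by
  classical
  refine ⟨?_, card_mul_card_add_one_div_two_le_sum (Fin.val_injective.comp e.injective)⟩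
  rw [Fintype.card_congr e, Fintype.card_fin, ← sum_range_cast_add_one,
    ← Fin.sum_univ_eq_sum_range (fun k => (k : ℝ) + 1)]
  exact e.sum_comp fun k : Fin n => ((k : ℕ) : ℝ) + 1

lemma convex_permutohedronIneq : Convex ℝ (permutohedronIneq ι) := by
  have hlin (E : Finset ι) : IsLinearMap ℝ fun a : ι → ℝ => ∑ j ∈ E, a j :=
    ⟨fun a b => sum_add_distrib, fun c a => (mul_sum E a c).symm⟩
  simp only [permutohedronIneq, Set.ofPred_and, Set.ofPred_forall]
  exact (convex_hyperplane (hlin univ) _).inter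
    (convex_iInter fun E => convex_halfSpace_ge (hlin E) _)

lemma le_card_of_isTight {a : ι → ℝ} (ha : a ∈ permutohedronIneq ι) {E : Finset ι}
    (hE : IsTight a E) {i : ι} (hi : i ∈ E) : a i ≤ #E := by
  classical
  have hrest := ha.2 (E.erase i)
  have hcard : (#E : ℝ) = #(E.erase i) + 1 := by exact_mod_cast (card_erase_add_one hi).symm
  rw [IsTight, ← add_sum_erase E a hi, hcard] at hE
  rw [hcard]
  nlinarith

lemma isCompact_permutohedronIneq : IsCompact (permutohedronIneq ι) := by
  have hclosed : IsClosed (permutohedronIneq ι) := by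
    simp only [permutohedronIneq, Set.ofPred_and, Set.ofPred_forall]
    exact (isClosed_eq (by fun_prop) continuous_const).inter
      (isClosed_iInter fun E => isClosed_le continuous_const (by fun_prop))
  refine (isCompact_Icc (a := fun _ => (1 : ℝ)) (b := fun _ => (Fintype.card ι : ℝ)))
    |>.of_isClosed_subset hclosed fun a ha => ⟨fun i => ?_, fun i => ?_⟩
  · simpa using ha.2 {i}
  · simpa using le_card_of_isTight ha (isTight_univ ha) (mem_univ i)

lemma IsTight.subset_or_subset {a : ι → ℝ} (ha : a ∈ permutohedronIneq ι) {E F : Finset ι}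
    (hE : IsTight a E) (hF : IsTight a F) : E ⊆ F ∨ F ⊆ E := by
  classical
  by_contra! hEF
  have hltE : (#(E ∩ F) : ℝ) < #E := by
    exact_mod_cast card_lt_card (inf_lt_left.2 hEF.1)
  have hltF : (#(E ∩ F) : ℝ) < #F := by
    exact_mod_cast card_lt_card (inf_lt_right.2 hEF.2)
  have hcard : (#(E ∪ F) : ℝ) + #(E ∩ F) = #E + #F := by
    exact_mod_cast card_union_add_card_inter E F
  have hsum := sum_union_inter (s₁ := E) (s₂ := F) (f := a)
  have hunion := ha.2 (E ∪ F)
  have hinter := ha.2 (E ∩ F)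
  rw [IsTight] at hE hF
  nlinarith [mul_pos (sub_pos.2 hltE) (sub_pos.2 hltF)]

lemma add_smul_single_sub_single_mem_permutohedronIneq [DecidableEq ι] {a : ι → ℝ}
    (ha : a ∈ permutohedronIneq ι) {i j : ι} {s : ℝ}
    (hs : ∀ E : Finset ι, Xor (i ∈ E) (j ∈ E) → |s| + #E * (#E + 1) / 2 ≤ ∑ k ∈ E, a k) :
    a + s • (Pi.single i 1 - Pi.single j 1) ∈ permutohedronIneq ι := by
  have hsum (E : Finset ι) : ∑ k ∈ E, (a + s • (Pi.single i 1 - Pi.single j 1) : ι → ℝ) k =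
      ∑ k ∈ E, a k + s * ((if i ∈ E then 1 else 0) - (if j ∈ E then 1 else 0)) := by
    simp [sum_add_distrib, ← mul_sum, sum_sub_distrib, sum_pi_single']
  refine ⟨?_, fun E => ?_⟩
  · rw [hsum univ]
    simpa using ha.1
  rw [hsum]
  by_cases hi : i ∈ E <;> by_cases hj : j ∈ E
  · simpa [hi, hj] using ha.2 E
  · have := hs E (by simp [hi, hj])
    simp only [hi, hj, if_true, if_false]
    linarith [neg_abs_le s]
  · have := hs E (by simp [hi, hj])
    simp only [hi, hj, if_true, if_false]
    linarith [le_abs_self s]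
  · simpa [hi, hj] using ha.2 E

lemma exists_isTight_xor_of_mem_extremePoints {a : ι → ℝ}
    (ha : a ∈ (permutohedronIneq ι).extremePoints ℝ) {i j : ι} (hij : i ≠ j) :
    ∃ E, IsTight a E ∧ Xor (i ∈ E) (j ∈ E) := by
  classical
  by_contra! hnt
  set slack : Finset ι → ℝ := fun E => ∑ k ∈ E, a k - #E * (#E + 1) / 2
  obtain ⟨E₀, hE₀, hmin⟩ :=
    (univ.filter fun E : Finset ι => Xor (i ∈ E) (j ∈ E)).exists_min_image slack
      ⟨{i}, mem_filter.2 ⟨mem_univ _, Or.inl ⟨mem_singleton_self i, by simpa using hij.symm⟩⟩⟩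
  rw [mem_filter] at hE₀
  have hpos : 0 < slack E₀ :=
    (sub_nonneg.2 (ha.1.2 E₀)).lt_of_ne fun h => hnt E₀ (sub_eq_zero.1 h.symm) hE₀.2
  have hmem (s : ℝ) (hs : |s| = slack E₀) :
      a + s • (Pi.single i 1 - Pi.single j 1) ∈ permutohedronIneq ι :=
    add_smul_single_sub_single_mem_permutohedronIneq ha.1 fun E hE => by
      have := hmin E (by simp [hE])
      simp only [slack] at this hs
      linarith
  have hzero := eq_zero_of_mem_extremePoints_of_add_mem_of_sub_mem ha (hmem _ (abs_of_pos hpos))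
    (by rw [sub_eq_add_neg, ← neg_smul]; exact hmem _ (by rw [abs_neg, abs_of_pos hpos]))
  simpa [hij, hpos.ne'] using congrFun hzero i

lemma exists_equiv_of_mem_extremePoints {n : ℕ} (hn : Fintype.card ι = n) {a : ι → ℝ}
    (ha : a ∈ (permutohedronIneq ι).extremePoints ℝ) :
    ∃ e : ι ≃ Fin n, a = fun i => ((e i : ℕ) : ℝ) + 1 := by
  classical
  have haP := ha.1
  have hT (i : ι) : ∃ T : Finset ι, (IsTight a T ∧ i ∈ T) ∧
      ∀ E, IsTight a E ∧ i ∈ E → #T ≤ #E := by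
    simpa using (univ.filter fun E => IsTight a E ∧ i ∈ E).exists_min_image card
      ⟨univ, by simp [isTight_univ haP]⟩
  choose T hT hTmin using hT
  have hlt {i j : ι} {E : Finset ι} (hE : IsTight a E) (hi : i ∈ E) (hj : j ∉ E) :
      #(T i) < #(T j) := by
    refine (hTmin i E ⟨hE, hi⟩).trans_lt (card_lt_card ?_)
    rcases hE.subset_or_subset haP (hT j).1 with h | h
    · exact (ssubset_iff_of_subset h).2 ⟨j, (hT j).2, hj⟩
    · exact absurd (h (hT j).2) hj
  have hinj : Function.Injective fun i => #(T i) := by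
    intro i j hij
    by_contra hne
    obtain ⟨E, hE, ⟨hi, hj⟩ | ⟨hj, hi⟩⟩ := exists_isTight_xor_of_mem_extremePoints ha hne
    · exact (hlt hE hi hj).ne hij
    · exact (hlt hE hj hi).ne' hij
  have hpos (i : ι) : 0 < #(T i) := card_pos.2 ⟨i, (hT i).2⟩
  have hle (i : ι) : #(T i) ≤ n := hn ▸ card_le_univ _
  let f : ι → Fin n := fun i => ⟨#(T i) - 1, by have := hpos i; have := hle i; omega⟩
  have hf : Function.Injective f := fun i j h => hinj <| by
    have := hpos i; have := hpos j
    simp only [f, Fin.mk.injEq] at h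
    show #(T i) = #(T j)
    omega
  let e := Equiv.ofBijective f
    ((Fintype.bijective_iff_injective_and_card f).2 ⟨hf, by simp [hn]⟩)
  have hae (i : ι) : a i ≤ ((e i : ℕ) : ℝ) + 1 := by
    simpa [e, f, Nat.cast_sub (hpos i)] using le_card_of_isTight haP (hT i).1 (hT i).2
  refine ⟨e, funext fun i => (sum_eq_sum_iff_of_le fun i _ => hae i).1 ?_ i (mem_univ i)⟩
  rw [haP.1, (equiv_add_one_mem_permutohedronIneq e).1]

end Permutohedron

theorem stmt_7 (r : ℕ) :
    permsHull r =
      {a : Fin r → ℝ |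
        (∑ j, a j) = (r : ℝ) * ((r : ℝ) + 1) / 2 ∧
        ∀ E : Finset (Fin r), (E.card : ℝ) * ((E.card : ℝ) + 1) / 2 ≤ ∑ j ∈ E, a j} := by
  set V := {v : Fin r → ℝ | ∃ σ : Equiv.Perm (Fin r), v = fun i => ((σ i : ℕ) : ℝ) + 1}
  have hP : permutohedronIneq (Fin r) = {a : Fin r → ℝ |
      (∑ j, a j) = (r : ℝ) * ((r : ℝ) + 1) / 2 ∧
      ∀ E : Finset (Fin r), (E.card : ℝ) * ((E.card : ℝ) + 1) / 2 ≤ ∑ j ∈ E, a j} := by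
    simp only [permutohedronIneq, Fintype.card_fin]
  rw [← hP]
  refine (convexHull_min ?_ convex_permutohedronIneq).antisymm ?_
  · rintro _ ⟨σ, rfl⟩
    exact equiv_add_one_mem_permutohedronIneq σ
  have hext : (permutohedronIneq (Fin r)).extremePoints ℝ ⊆ V := fun a ha =>
    exists_equiv_of_mem_extremePoints (Fintype.card_fin r) ha
  have hV : V.Finite :=
    (Set.finite_range fun σ : Equiv.Perm (Fin r) => fun i => ((σ i : ℕ) : ℝ) + 1).subset
      fun _ ⟨σ, hσ⟩ => ⟨σ, hσ.symm⟩
  calc permutohedronIneq (Fin r)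
      = closure (convexHull ℝ ((permutohedronIneq (Fin r)).extremePoints ℝ)) :=
        (closure_convexHull_extremePoints isCompact_permutohedronIneq
          convex_permutohedronIneq).symm
    _ ⊆ closure (permsHull r) := closure_mono (convexHull_mono hext)
    _ = permsHull r := (hV.isCompact_convexHull (𝕜 := ℝ)).isClosed.closure_eq
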